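/- Let k ≥ 1 be an integer and let f, φ : ℝ → ℂ be infinitely differentiable. Then for every x ∈ ℝ the following decomposition identity for the 2k-th derivative holds: f(x)·(fφ)^{(2k)}(x) = (1/2)·[ f(x)²·φ^{(2k)}(x) + (f²φ)^{(2k)}(x) ] − (1/2)·Σ_{m=1}^{2k−1} Σ_{n=1}^{2k−m} [ (2k)! / ( (2k−m−n)! · m! · n! ) ] · f^{(m)}(x) · f^{(n)}(x) · φ^{(2k−m−n)}(x), where g^{(j)} denotes the j-th derivative. -/

import Mathlib

/-!
Leibniz's rule applied to `f * (f * φ)`, and then to every `(f * φ)⁽ᴺ⁻ᵐ⁾`, expands `(f²φ)⁽ᴺ⁾` as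
a double sum over `m + n ≤ N` with coefficients `C(N, m) C(N - m, n) = N! / ((N - m - n)! m! n!)`.
The terms with `m = 0` add up to `f (fφ)⁽ᴺ⁾`, those with `m ≥ 1, n = 0` to
`f ((fφ)⁽ᴺ⁾ - f φ⁽ᴺ⁾)`, so `(f²φ)⁽ᴺ⁾ = 2 f (fφ)⁽ᴺ⁾ - f² φ⁽ᴺ⁾ + ∑_{m, n ≥ 1} …`;
solving for `f (fφ)⁽ᴺ⁾` gives the identity.
-/

open Finset

theorem Finset.sum_range_succ_eq_add_sum_Icc_one {M : Type*} [AddCommMonoid M] (f : ℕ → M)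
    (n : ℕ) : ∑ i ∈ range (n + 1), f i = f 0 + ∑ i ∈ Icc 1 n, f i := by
  rw [Nat.range_succ_eq_Icc_zero, ← add_sum_Ioc_eq_sum_Icc n.zero_le, ← Icc_add_one_left_eq_Ioc,
    zero_add]

theorem Nat.cast_choose_mul_choose {K : Type*} [Field K] [CharZero K] {N m n : ℕ}
    (h : m + n ≤ N) :
    (N.choose m * (N - m).choose n : K) =
      N.factorial / ((N - m - n).factorial * m.factorial * n.factorial) := by
  rw [Nat.cast_choose K (by omega : m ≤ N), Nat.cast_choose K (by omega : n ≤ N - m)]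
  have : ((N - m).factorial : K) ≠ 0 := mod_cast (N - m).factorial_ne_zero
  field_simp

section Leibniz

variable {𝕜 : Type*} [NontriviallyNormedField 𝕜] {𝔸 : Type*} [NormedRing 𝔸]
  [NormedAlgebra 𝕜 𝔸] {n : ℕ} {x : 𝕜} {f g : 𝕜 → 𝔸}

theorem iteratedDeriv_fun_mul_eq_add_sum_Icc (hf : ContDiffAt 𝕜 n f x)
    (hg : ContDiffAt 𝕜 n g x) :
    iteratedDeriv n (fun y => f y * g y) x = f x * iteratedDeriv n g x +
      ∑ i ∈ Icc 1 n, n.choose i * iteratedDeriv i f x * iteratedDeriv (n - i) g x := by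
  simp [iteratedDeriv_fun_mul hf hg, sum_range_succ_eq_add_sum_Icc_one]

end Leibniz

section Square

variable {𝕜 : Type*} [NontriviallyNormedField 𝕜] {𝔸 : Type*} [NormedCommRing 𝔸]
  [NormedAlgebra 𝕜 𝔸] {N : ℕ} {x : 𝕜} {f φ : 𝕜 → 𝔸}

theorem iteratedDeriv_sq_mul (hf : ContDiffAt 𝕜 N f x) (hφ : ContDiffAt 𝕜 N φ x) :
    iteratedDeriv N (fun y => f y ^ 2 * φ y) x =
      2 * (f x * iteratedDeriv N (fun y => f y * φ y) x) - f x ^ 2 * iteratedDeriv N φ x +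
      ∑ m ∈ Icc 1 (N - 1), ∑ n ∈ Icc 1 (N - m),
        (N.choose m * (N - m).choose n : 𝔸) *
          iteratedDeriv m f x * iteratedDeriv n f x * iteratedDeriv (N - m - n) φ x := by
  have leibniz_fφ (j : ℕ) (hj : j ≤ N) :=
    have hj : (j : WithTop ℕ∞) ≤ N := mod_cast hj
    iteratedDeriv_fun_mul_eq_add_sum_Icc (hf.of_le hj) (hφ.of_le hj)
  have drop_top : ∑ m ∈ Icc 1 N, ∑ n ∈ Icc 1 (N - m),
        (N.choose m * (N - m).choose n : 𝔸) *
          iteratedDeriv m f x * iteratedDeriv n f x * iteratedDeriv (N - m - n) φ x =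
      ∑ m ∈ Icc 1 (N - 1), ∑ n ∈ Icc 1 (N - m),
        (N.choose m * (N - m).choose n : 𝔸) *
          iteratedDeriv m f x * iteratedDeriv n f x * iteratedDeriv (N - m - n) φ x := by
    refine (sum_subset (Icc_subset_Icc_right (N.sub_le 1)) fun m hm hm' => ?_).symm
    rw [mem_Icc] at hm hm'
    rw [show N - m = 0 by omega, Icc_eq_empty_of_lt zero_lt_one, sum_empty]
  calc iteratedDeriv N (fun y => f y ^ 2 * φ y) x
      = iteratedDeriv N (fun y => f y * (f y * φ y)) x := by congr 1; ext; ring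
    _ = f x * iteratedDeriv N (fun y => f y * φ y) x + ∑ m ∈ Icc 1 N, N.choose m *
          iteratedDeriv m f x * iteratedDeriv (N - m) (fun y => f y * φ y) x :=
      iteratedDeriv_fun_mul_eq_add_sum_Icc hf (hf.mul hφ)
    _ = f x * iteratedDeriv N (fun y => f y * φ y) x +
          f x * ∑ m ∈ Icc 1 N, N.choose m * iteratedDeriv m f x * iteratedDeriv (N - m) φ x +
          ∑ m ∈ Icc 1 N, ∑ n ∈ Icc 1 (N - m), (N.choose m * (N - m).choose n : 𝔸) *
            iteratedDeriv m f x * iteratedDeriv n f x * iteratedDeriv (N - m - n) φ x := by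
      rw [add_assoc, mul_sum, ← sum_add_distrib]
      refine congrArg _ (sum_congr rfl fun m _ => ?_)
      rw [leibniz_fφ (N - m) (N.sub_le m), mul_add, mul_sum]
      congr 1
      · ring
      · exact sum_congr rfl fun n _ => by ring
    _ = _ := by
      rw [drop_top, ← sub_eq_iff_eq_add'.mpr (leibniz_fφ N le_rfl)]
      ring

end Square

theorem statement8 (k : ℕ) (f φ : ℝ → ℂ)
    (hf : ContDiff ℝ (⊤ : ℕ∞) f) (hφ : ContDiff ℝ (⊤ : ℕ∞) φ) (x : ℝ) :
    f x * iteratedDeriv (2 * k) (fun y => f y * φ y) x =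
      (1 / 2) * (f x ^ 2 * iteratedDeriv (2 * k) φ x +
        iteratedDeriv (2 * k) (fun y => f y ^ 2 * φ y) x) -
      (1 / 2) * ∑ m ∈ Finset.Icc 1 (2 * k - 1), ∑ n ∈ Finset.Icc 1 (2 * k - m),
        (((2 * k).factorial : ℂ) /
            (((2 * k - m - n).factorial : ℂ) * (m.factorial : ℂ) * (n.factorial : ℂ))) *
          iteratedDeriv m f x * iteratedDeriv n f x *
          iteratedDeriv (2 * k - m - n) φ x := by
  have contDiffAt_of_smooth {g : ℝ → ℂ} (hg : ContDiff ℝ (⊤ : ℕ∞) g) : ContDiffAt ℝ (2 * k) g x :=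
    hg.contDiffAt.of_le (WithTop.coe_le_coe.mpr le_top)
  have coeff : ∀ m ∈ Icc 1 (2 * k - 1), ∀ n ∈ Icc 1 (2 * k - m),
      ((2 * k).factorial / ((2 * k - m - n).factorial * m.factorial * n.factorial) : ℂ) =
        (2 * k).choose m * (2 * k - m).choose n := fun m hm n hn =>
    (Nat.cast_choose_mul_choose (by simp only [mem_Icc] at hm hn; omega)).symm
  rw [sum_congr rfl fun m hm => sum_congr rfl fun n hn => by rw [coeff m hm n hn]]
  linear_combination (-1 / 2 : ℂ) * iteratedDeriv_sq_mul (contDiffAt_of_smooth hf) (contDiffAt_of_smooth hφ)
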